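/- Let μ₁, μ₂ be probability measures on a finite set S with ν(s) = min(μ₁(s), μ₂(s)), ν₀ = Σ_s ν(s) < 1, τ = (μ₁-ν)/(1-ν₀), τ' = (μ₂-ν)/(1-ν₀). Let X ~ Bernoulli(ν₀), ξ ~ ν/ν₀, and (χ,χ') a coupling of (τ,τ'), all independent. Setting (σ,σ') = (ξ,ξ) if X = 1 and (σ,σ') = (χ,χ') if X = 0 yields a coupling of μ₁ and μ₂, and for every s ∈ S, the conditional probability ℙ(σ ≠ σ' | σ = s) ≤ (1-ν₀)·τ(s)/ν(s) (interpreted as 0 when τ(s) = 0). -/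

import Mathlib

open scoped Classical

noncomputable section

variable {S : Type*} [Fintype S] [DecidableEq S]

/-- Sample space for the RSM coupling construction: `(X, ξ, (χ, χ'))`. -/
abbrev CoupSpace (S : Type*) := Bool × S × (S × S)

/-- The joint law of independent `X ~ Bernoulli(ν₀)`, `ξ ~ ν/ν₀`, `(χ,χ') ~ κ`. -/
noncomputable def coupLaw (ν : S → ℝ) (ν₀ : ℝ) (κ : S × S → ℝ) :
    CoupSpace S → ℝ :=
  fun ω => (if ω.1 then ν₀ else 1 - ν₀) * (ν ω.2.1 / ν₀) * κ ω.2.2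

/-- `σ = ξ` if `X = 1`, else `σ = χ`. -/
def sigma1 : CoupSpace S → S := fun ω => if ω.1 then ω.2.1 else ω.2.2.1

/-- `σ' = ξ` if `X = 1`, else `σ' = χ'`. -/
def sigma2 : CoupSpace S → S := fun ω => if ω.1 then ω.2.1 else ω.2.2.2

/-!
Split on the coin `X`. On `{X = 1}` both coordinates equal `ξ`; its law `ν/ν₀`, weighted by
`ℙ(X = 1) = ν₀`, contributes exactly `ν`. On `{X = 0}` the pair is `(χ, χ')`, contributing
`(1 - ν₀) κ`. So `σ` has law `ν + (1 - ν₀) τ = μ₁` and `σ'` has law `ν + (1 - ν₀) τ' = μ₂`.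
Since `σ ≠ σ'` forces `X = 0`, `ℙ(σ = s ≠ σ') ≤ (1 - ν₀) τ(s)`, which is at most
`(1 - ν₀) τ(s) μ₁(s) / ν(s)` because `ν ≤ μ₁`.
-/

theorem Finset.sum_ite_and_le_sum_ite {ι M : Type*} [AddCommMonoid M] [PartialOrder M]
    [IsOrderedAddMonoid M] (t : Finset ι) {f : ι → M} (hf : ∀ i, 0 ≤ f i) (P Q : ι → Prop)
    [DecidablePred P] [DecidablePred Q] :
    (∑ i ∈ t, if P i ∧ Q i then f i else 0) ≤ ∑ i ∈ t, if P i then f i else 0 :=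
  Finset.sum_le_sum fun i _ => by
    split_ifs with hPQ hP hP
    exacts [le_rfl, absurd hPQ.1 hP, hf i, le_rfl]

theorem sum_ite_fst_eq (κ : S × S → ℝ) (s : S) :
    (∑ p : S × S, if p.1 = s then κ p else 0) = ∑ c', κ (s, c') := by
  rw [Fintype.sum_prod_type, Finset.sum_eq_single s (fun c _ hc => by simp [hc]) (by simp)]
  simp

theorem sum_ite_snd_eq (κ : S × S → ℝ) (s : S) :
    (∑ p : S × S, if p.2 = s then κ p else 0) = ∑ c, κ (c, s) := by
  simp [Fintype.sum_prod_type]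

section CoupLaw

variable {ν : S → ℝ} {ν₀ : ℝ} {κ : S × S → ℝ}

omit [DecidableEq S] in
theorem sum_coupLaw_of_event (hν₀ : ν₀ = ∑ s, ν s) (hpos : ν₀ ≠ 0) (hκ : ∑ p, κ p = 1)
    (E : CoupSpace S → Prop) (A : S → Prop) (B : S × S → Prop)
    [DecidablePred E] [DecidablePred A] [DecidablePred B]
    (hA : ∀ x p, E (true, x, p) ↔ A x) (hB : ∀ x p, E (false, x, p) ↔ B p) :
    (∑ ω, if E ω then coupLaw ν ν₀ κ ω else 0) =
      (∑ x, if A x then ν x else 0) + (1 - ν₀) * ∑ p, if B p then κ p else 0 := by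
  have hξ : ∑ x, ν x / ν₀ = 1 := by rw [← Finset.sum_div, ← hν₀, div_self hpos]
  rw [Fintype.sum_prod_type, Fintype.sum_bool]
  simp only [Fintype.sum_prod_type (f := fun q : S × S × S => _), coupLaw, hA, hB, if_true,
    Bool.false_eq_true, if_false]
  congr 1
  · refine Finset.sum_congr rfl fun x _ => ?_
    split_ifs
    · rw [← Finset.mul_sum, hκ, mul_one, mul_div_cancel₀ _ hpos]
    · simp
  · calc _ = ∑ x, ν x / ν₀ * ((1 - ν₀) * ∑ p, if B p then κ p else 0) := by
          refine Finset.sum_congr rfl fun x _ => ?_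
          rw [Finset.mul_sum, Finset.mul_sum]
          refine Finset.sum_congr rfl fun p _ => ?_
          split_ifs <;> ring
      _ = _ := by rw [← Finset.sum_mul, hξ, one_mul]

theorem sum_coupLaw_sigma1_eq (hν₀ : ν₀ = ∑ s, ν s) (hpos : ν₀ ≠ 0) (hκ : ∑ p, κ p = 1)
    (s : S) :
    (∑ ω, if sigma1 ω = s then coupLaw ν ν₀ κ ω else 0) = ν s + (1 - ν₀) * ∑ c', κ (s, c') := by
  rw [sum_coupLaw_of_event hν₀ hpos hκ (sigma1 · = s) (· = s) (·.1 = s) (fun _ _ => Iff.rfl)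
    (fun _ _ => Iff.rfl), Finset.sum_ite_eq', if_pos (Finset.mem_univ s), sum_ite_fst_eq]

theorem sum_coupLaw_sigma2_eq (hν₀ : ν₀ = ∑ s, ν s) (hpos : ν₀ ≠ 0) (hκ : ∑ p, κ p = 1)
    (s : S) :
    (∑ ω, if sigma2 ω = s then coupLaw ν ν₀ κ ω else 0) = ν s + (1 - ν₀) * ∑ c, κ (c, s) := by
  rw [sum_coupLaw_of_event hν₀ hpos hκ (sigma2 · = s) (· = s) (·.2 = s) (fun _ _ => Iff.rfl)
    (fun _ _ => Iff.rfl), Finset.sum_ite_eq', if_pos (Finset.mem_univ s), sum_ite_snd_eq]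

theorem sum_coupLaw_sigma1_ne_eq (hν₀ : ν₀ = ∑ s, ν s) (hpos : ν₀ ≠ 0) (hκ : ∑ p, κ p = 1)
    (s : S) :
    (∑ ω, if sigma1 ω = s ∧ sigma1 ω ≠ sigma2 ω then coupLaw ν ν₀ κ ω else 0) =
      (1 - ν₀) * ∑ p : S × S, if p.1 = s ∧ p.1 ≠ p.2 then κ p else 0 := by
  rw [sum_coupLaw_of_event hν₀ hpos hκ (fun ω => sigma1 ω = s ∧ sigma1 ω ≠ sigma2 ω)
    (fun _ => False) (fun p => p.1 = s ∧ p.1 ≠ p.2) (by simp [sigma1, sigma2])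
    (fun _ _ => Iff.rfl)]
  simp

theorem sum_coupLaw_sigma1_ne_nonneg (hν₀ : ν₀ = ∑ s, ν s) (hpos : ν₀ ≠ 0)
    (hκ : ∑ p, κ p = 1) (hκ0 : ∀ p, 0 ≤ κ p) (hle : ν₀ ≤ 1) (s : S) :
    0 ≤ ∑ ω, if sigma1 ω = s ∧ sigma1 ω ≠ sigma2 ω then coupLaw ν ν₀ κ ω else 0 := by
  rw [sum_coupLaw_sigma1_ne_eq hν₀ hpos hκ]
  exact mul_nonneg (by linarith) (Finset.sum_nonneg fun p _ => by split_ifs <;> simp [hκ0])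

theorem sum_coupLaw_sigma1_ne_le (hν₀ : ν₀ = ∑ s, ν s) (hpos : ν₀ ≠ 0) (hκ : ∑ p, κ p = 1)
    (hκ0 : ∀ p, 0 ≤ κ p) (hle : ν₀ ≤ 1) (s : S) :
    (∑ ω, if sigma1 ω = s ∧ sigma1 ω ≠ sigma2 ω then coupLaw ν ν₀ κ ω else 0) ≤
      (1 - ν₀) * ∑ c', κ (s, c') := by
  rw [sum_coupLaw_sigma1_ne_eq hν₀ hpos hκ, ← sum_ite_fst_eq]
  exact mul_le_mul_of_nonneg_left
    (Finset.univ.sum_ite_and_le_sum_ite hκ0 (·.1 = s) fun p => p.1 ≠ p.2) (by linarith)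

end CoupLaw

theorem rsm_coupling_general (μ₁ μ₂ : S → ℝ)
    (h₁1 : ∑ s : S, μ₁ s = 1)
    (ν : S → ℝ) (hν : ∀ s, ν s = min (μ₁ s) (μ₂ s))
    (ν₀ : ℝ) (hν₀ : ν₀ = ∑ s : S, ν s) (hpos : 0 < ν₀) (hlt : ν₀ < 1)
    (τ τ' : S → ℝ)
    (hτ : ∀ s, τ s = (μ₁ s - ν s) / (1 - ν₀))
    (hτ' : ∀ s, τ' s = (μ₂ s - ν s) / (1 - ν₀))
    (κ : S × S → ℝ) (hκ0 : ∀ p, 0 ≤ κ p)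
    (hκ1 : ∀ c, ∑ c' : S, κ (c, c') = τ c)
    (hκ2 : ∀ c', ∑ c : S, κ (c, c') = τ' c') :
    (∀ s, (∑ ω : CoupSpace S, if sigma1 ω = s then coupLaw ν ν₀ κ ω else 0) = μ₁ s) ∧
    (∀ s, (∑ ω : CoupSpace S, if sigma2 ω = s then coupLaw ν ν₀ κ ω else 0) = μ₂ s) ∧
    (∀ s, 0 < ν s →
      (∑ ω : CoupSpace S, if sigma1 ω = s ∧ sigma1 ω ≠ sigma2 ω then coupLaw ν ν₀ κ ω else 0)
        ≤ ((1 - ν₀) * τ s / ν s) *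
          (∑ ω : CoupSpace S, if sigma1 ω = s then coupLaw ν ν₀ κ ω else 0)) ∧
    (∀ s, τ s = 0 →
      (∑ ω : CoupSpace S, if sigma1 ω = s ∧ sigma1 ω ≠ sigma2 ω then coupLaw ν ν₀ κ ω else 0)
        = 0) := by
  have h1ν₀ : 1 - ν₀ ≠ 0 := by linarith
  have hμ₁ : ∀ s, ν s + (1 - ν₀) * τ s = μ₁ s := fun s => by
    rw [hτ, mul_div_cancel₀ _ h1ν₀]; ring
  have hμ₂ : ∀ s, ν s + (1 - ν₀) * τ' s = μ₂ s := fun s => by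
    rw [hτ', mul_div_cancel₀ _ h1ν₀]; ring
  have hκ : ∑ p, κ p = 1 := by
    rw [Fintype.sum_prod_type]
    simp only [hκ1, hτ, ← Finset.sum_div, Finset.sum_sub_distrib, h₁1, ← hν₀, div_self h1ν₀]
  have hσ₁ : ∀ s, (∑ ω, if sigma1 ω = s then coupLaw ν ν₀ κ ω else 0) = μ₁ s := fun s => by
    rw [sum_coupLaw_sigma1_eq hν₀ hpos.ne' hκ, hκ1, hμ₁]
  have hbad_le := sum_coupLaw_sigma1_ne_le hν₀ hpos.ne' hκ hκ0 hlt.le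
  refine ⟨hσ₁, fun s => by rw [sum_coupLaw_sigma2_eq hν₀ hpos.ne' hκ, hκ2, hμ₂],
    fun s hs => ?_, fun s hs => ?_⟩
  · have hνμ₁ : ν s ≤ μ₁ s := (hν s).le.trans (min_le_left _ _)
    calc _ ≤ (1 - ν₀) * τ s := hκ1 s ▸ hbad_le s
      _ ≤ (1 - ν₀) * τ s * (μ₁ s / ν s) :=
          le_mul_of_one_le_right (by linarith [hμ₁ s]) ((one_le_div hs).2 hνμ₁)
      _ = _ := by rw [hσ₁, mul_div_assoc', div_mul_eq_mul_div]
  · refine le_antisymm ?_ (sum_coupLaw_sigma1_ne_nonneg hν₀ hpos.ne' hκ hκ0 hlt.le s)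
    simpa [hκ1, hs] using hbad_le s

/-- The RSM coupling construction: `(σ, σ')` is a coupling of `μ₁` and `μ₂`, and
for every `s`, `ℙ(σ ≠ σ' | σ = s) ≤ (1-ν₀)·τ(s)/ν(s)` (when `ν(s) > 0`;
interpreted as `0` when `τ(s) = 0`). -/
theorem rsm_coupling (μ₁ μ₂ : S → ℝ)
    (h₁0 : ∀ s, 0 ≤ μ₁ s) (h₁1 : ∑ s : S, μ₁ s = 1)
    (h₂0 : ∀ s, 0 ≤ μ₂ s) (h₂1 : ∑ s : S, μ₂ s = 1)
    (ν : S → ℝ) (hν : ∀ s, ν s = min (μ₁ s) (μ₂ s))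
    (ν₀ : ℝ) (hν₀ : ν₀ = ∑ s : S, ν s) (hpos : 0 < ν₀) (hlt : ν₀ < 1)
    (τ τ' : S → ℝ)
    (hτ : ∀ s, τ s = (μ₁ s - ν s) / (1 - ν₀))
    (hτ' : ∀ s, τ' s = (μ₂ s - ν s) / (1 - ν₀))
    (κ : S × S → ℝ) (hκ0 : ∀ p, 0 ≤ κ p)
    (hκ1 : ∀ c, ∑ c' : S, κ (c, c') = τ c)
    (hκ2 : ∀ c', ∑ c : S, κ (c, c') = τ' c') :
    (∀ s, (∑ ω : CoupSpace S, if sigma1 ω = s then coupLaw ν ν₀ κ ω else 0) = μ₁ s) ∧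
    (∀ s, (∑ ω : CoupSpace S, if sigma2 ω = s then coupLaw ν ν₀ κ ω else 0) = μ₂ s) ∧
    (∀ s, 0 < ν s →
      (∑ ω : CoupSpace S, if sigma1 ω = s ∧ sigma1 ω ≠ sigma2 ω then coupLaw ν ν₀ κ ω else 0)
        ≤ ((1 - ν₀) * τ s / ν s) *
          (∑ ω : CoupSpace S, if sigma1 ω = s then coupLaw ν ν₀ κ ω else 0)) ∧
    (∀ s, τ s = 0 →
      (∑ ω : CoupSpace S, if sigma1 ω = s ∧ sigma1 ω ≠ sigma2 ω then coupLaw ν ν₀ κ ω else 0)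
        = 0) :=
  rsm_coupling_general μ₁ μ₂ h₁1 ν hν ν₀ hν₀ hpos hlt τ τ' hτ hτ' κ hκ0 hκ1 hκ2

end
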